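/- Every real B-Nekrasov matrix is a P-matrix, i.e., all of its principal minors are positive. -/

import Mathlib

open Finset

noncomputable def nekH {n : ℕ} {𝕜 : Type*} [RCLike 𝕜] (A : Matrix (Fin n) (Fin n) 𝕜) : Fin n → ℝ
  | i =>
    (∑ j : Fin n, if h : j < i then ‖A i j‖ / ‖A j j‖ * nekH A j else 0)
      + ∑ j : Fin n, if i < j then ‖A i j‖ else 0
termination_by i => i.val
decreasing_by exact h

def IsNekrasov {n : ℕ} {𝕜 : Type*} [RCLike 𝕜] (A : Matrix (Fin n) (Fin n) 𝕜) : Prop :=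
  ∀ i, nekH A i < ‖A i i‖

noncomputable def nekZ {n : ℕ} {𝕜 : Type*} [RCLike 𝕜] (A : Matrix (Fin n) (Fin n) 𝕜) : Fin n → ℝ
  | i => (∑ j : Fin n, if h : j < i then ‖A i j‖ / ‖A j j‖ * nekZ A j else 0) + 1
termination_by i => i.val
decreasing_by exact h

noncomputable def nekEta {n : ℕ} {𝕜 : Type*} [RCLike 𝕜] (M : Matrix (Fin n) (Fin n) 𝕜) : Fin n → ℝ
  | i => (∑ j : Fin n, if h : j < i then ‖M i j‖ / min ‖M j j‖ 1 * nekEta M j else 0) + 1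
termination_by i => i.val
decreasing_by exact h

noncomputable def linftyNorm {n : ℕ} {𝕜 : Type*} [RCLike 𝕜] (A : Matrix (Fin n) (Fin n) 𝕜) : ℝ :=
  ⨆ i, ∑ j, ‖A i j‖

noncomputable def rPlus {n : ℕ} (M : Matrix (Fin n) (Fin n) ℝ) (i : Fin n) : ℝ :=
  fold max 0 (fun j => M i j) (univ.erase i)

noncomputable def BPlus {n : ℕ} (M : Matrix (Fin n) (Fin n) ℝ) : Matrix (Fin n) (Fin n) ℝ :=
  Matrix.of fun i j => M i j - rPlus M i

def IsBNekrasov {n : ℕ} (M : Matrix (Fin n) (Fin n) ℝ) : Prop :=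
  IsNekrasov (BPlus M) ∧ ∀ i, 0 < BPlus M i i

def IsLCPSolution {n : ℕ} (M : Matrix (Fin n) (Fin n) ℝ) (q x : Fin n → ℝ) : Prop :=
  (∀ i, 0 ≤ x i) ∧ (∀ i, 0 ≤ (M.mulVec x + q) i) ∧ ∑ i, (M.mulVec x + q) i * x i = 0

def IsPMatrix {n : ℕ} (M : Matrix (Fin n) (Fin n) ℝ) : Prop :=
  ∀ S : Finset (Fin n), 0 < (M.submatrix (fun i : S => (i : Fin n)) (fun j : S => (j : Fin n))).det


/-!
Write `M = B⁺ + r 1ᵀ` with `r ≥ 0`; every principal submatrix of `M` is then `B + c 1ᵀ` with `B`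
the corresponding principal submatrix of `B⁺` and `c ≥ 0`. As `B⁺` is a Z-matrix with positive
diagonal, the Nekrasov condition gives `d > 0` with `B⁺ d > 0`, and this semipositivity passes to
principal submatrices. For a semipositive Z-matrix `B`, `B x ≥ 0` forces `x ≥ 0` (look at the index
minimising `x i / d i`); applied to `±x` this shows that `B + c 1ᵀ` is nonsingular. Every matrix on
the segment from `diag B` to `B + c 1ᵀ` again has this shape, so the determinant, positive at
`diag B`, stays positive.
-/
open Matrix Function Filter Topology

theorem Matrix.vecMulVec_one_mulVec {ι : Type*} [Fintype ι] (c x : ι → ℝ) :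
    vecMulVec c 1 *ᵥ x = (∑ j, x j) • c := by
  ext i
  simp [mulVec, dotProduct, vecMulVec, mul_sum, mul_comm]

theorem Matrix.det_pos_of_det_segment_ne_zero {ι : Type*} [Fintype ι] [DecidableEq ι]
    {A₀ A₁ : Matrix ι ι ℝ} (h₀ : 0 < A₀.det)
    (h : ∀ t ∈ Set.Icc (0 : ℝ) 1, ((1 - t) • A₀ + t • A₁).det ≠ 0) : 0 < A₁.det := by
  by_contra! h₁
  have hcont : Continuous fun t : ℝ => ((1 - t) • A₀ + t • A₁).det := by fun_prop
  obtain ⟨t, ht, ht0⟩ := intermediate_value_Icc' zero_le_one hcont.continuousOn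
    (by simpa using And.intro h₁ h₀.le : (0 : ℝ) ∈ Set.Icc _ _)
  exact h t ht ht0

def IsZMatrix {ι : Type*} (B : Matrix ι ι ℝ) : Prop :=
  ∀ i j, i ≠ j → B i j ≤ 0

namespace IsZMatrix

variable {ι κ : Type*} {B : Matrix ι ι ℝ} {d x : ι → ℝ}

theorem submatrix (hB : IsZMatrix B) {e : κ → ι} (he : Injective e) :
    IsZMatrix (B.submatrix e e) :=
  fun _ _ hkl => hB _ _ (he.ne hkl)

variable [Fintype ι]

theorem mulVec_apply_le_of_le_of_eq (hB : IsZMatrix B) {i : ι} (hle : ∀ j, d j ≤ x j)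
    (heq : x i = d i) : (B *ᵥ x) i ≤ (B *ᵥ d) i := by
  refine sum_le_sum fun j _ => ?_
  rcases eq_or_ne i j with rfl | hij
  · rw [heq]
  · exact mul_le_mul_of_nonpos_left (hle j) (hB i j hij)

theorem mulVec_apply_le_diag_mul (hB : IsZMatrix B) (hd : ∀ j, 0 ≤ d j) (i : ι) :
    (B *ᵥ d) i ≤ B i i * d i := by
  classical
  rw [mulVec, dotProduct, ← add_sum_erase _ _ (mem_univ i)]
  refine add_le_of_nonpos_right (sum_nonpos fun j hj => ?_)
  exact mul_nonpos_of_nonpos_of_nonneg (hB i j (ne_of_mem_erase hj).symm) (hd j)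

theorem mulVec_apply_le_mulVec_submatrix [Fintype κ] (hB : IsZMatrix B) {e : κ → ι}
    (he : Injective e) (hd : ∀ j, 0 ≤ d j) (k : κ) :
    (B *ᵥ d) (e k) ≤ (B.submatrix e e *ᵥ (d ∘ e)) k := by
  classical
  have hsub : univ.map ⟨e, he⟩ ⊆ univ := subset_univ _
  simp only [mulVec, dotProduct, submatrix_apply, Function.comp_apply]
  rw [← sum_sdiff hsub, sum_map]
  refine add_le_of_nonpos_left (sum_nonpos fun j hj => ?_)
  have hjk : e k ≠ j := fun h =>
    (mem_sdiff.1 hj).2 (h ▸ mem_map_of_mem _ (mem_univ k))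
  exact mul_nonpos_of_nonpos_of_nonneg (hB _ _ hjk) (hd j)

theorem nonneg_of_mulVec_nonneg (hB : IsZMatrix B) (hd : ∀ j, 0 < d j)
    (hBd : ∀ i, 0 < (B *ᵥ d) i) (hx : ∀ i, 0 ≤ (B *ᵥ x) i) (i : ι) : 0 ≤ x i := by
  by_contra! hxi
  have : Nonempty ι := ⟨i⟩
  obtain ⟨i₀, hi₀⟩ := Finite.exists_min fun j => x j / d j
  set μ := x i₀ / d i₀
  have hμ : μ < 0 := (hi₀ i).trans_lt (div_neg_of_neg_of_pos hxi (hd i))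
  have hle : ∀ j, (μ • d) j ≤ x j := fun j => (le_div_iff₀ (hd j)).1 (hi₀ j)
  have heq : x i₀ = (μ • d) i₀ := (div_mul_cancel₀ _ (hd i₀).ne').symm
  have := hB.mulVec_apply_le_of_le_of_eq hle heq
  rw [mulVec_smul, Pi.smul_apply, smul_eq_mul] at this
  linarith [hx i₀, mul_neg_of_neg_of_pos hμ (hBd i₀)]

theorem eq_zero_of_add_vecMulVec_mulVec_eq_zero (hB : IsZMatrix B) (hd : ∀ j, 0 < d j)
    (hBd : ∀ i, 0 < (B *ᵥ d) i) {c : ι → ℝ} (hc : ∀ i, 0 ≤ c i) {x : ι → ℝ}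
    (hx : (B + vecMulVec c 1) *ᵥ x = 0) : x = 0 := by
  set σ := ∑ j, x j
  have hBx : ∀ i, (B *ᵥ x) i = -(σ * c i) := fun i => by
    have := congrFun hx i
    rw [add_mulVec, vecMulVec_one_mulVec] at this
    simp only [Pi.add_apply, Pi.smul_apply, smul_eq_mul, Pi.zero_apply] at this
    linarith
  have hσ : σ = 0 := by
    rcases le_total σ 0 with h | h
    · refine le_antisymm h (sum_nonneg fun j _ => ?_)
      exact hB.nonneg_of_mulVec_nonneg hd hBd (fun i => by rw [hBx]; nlinarith [hc i]) j
    · refine le_antisymm (sum_nonpos fun j _ => neg_nonneg.1 ?_) h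
      refine hB.nonneg_of_mulVec_nonneg hd hBd (x := -x) (fun i => ?_) j
      rw [mulVec_neg, Pi.neg_apply, hBx]; nlinarith [hc i]
  have hBx0 : ∀ i, 0 ≤ (B *ᵥ x) i := fun i => by simp [hBx, hσ]
  have hBnx0 : ∀ i, 0 ≤ (B *ᵥ -x) i := fun i => by simp [mulVec_neg, hBx, hσ]
  funext j
  exact le_antisymm (neg_nonneg.1 (hB.nonneg_of_mulVec_nonneg hd hBd hBnx0 j))
    (hB.nonneg_of_mulVec_nonneg hd hBd hBx0 j)

variable [DecidableEq ι]

theorem det_add_vecMulVec_ne_zero (hB : IsZMatrix B) (hd : ∀ j, 0 < d j)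
    (hBd : ∀ i, 0 < (B *ᵥ d) i) {c : ι → ℝ} (hc : ∀ i, 0 ≤ c i) :
    (B + vecMulVec c 1).det ≠ 0 := by
  rw [Ne, ← exists_mulVec_eq_zero_iff]
  rintro ⟨x, hx0, hx⟩
  exact hx0 (hB.eq_zero_of_add_vecMulVec_mulVec_eq_zero hd hBd hc hx)

theorem det_add_vecMulVec_pos (hB : IsZMatrix B) (hd : ∀ j, 0 < d j)
    (hBd : ∀ i, 0 < (B *ᵥ d) i) {c : ι → ℝ} (hc : ∀ i, 0 ≤ c i) :
    0 < (B + vecMulVec c 1).det := by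
  have hdiag : ∀ i, 0 < B i i * d i := fun i =>
    (hBd i).trans_le (hB.mulVec_apply_le_diag_mul (fun j => (hd j).le) i)
  refine det_pos_of_det_segment_ne_zero (A₀ := diagonal B.diag) ?_ fun t ht => ?_
  · rw [det_diagonal]
    exact prod_pos fun i _ => pos_of_mul_pos_left (hdiag i) (hd i).le
  set Bt := (1 - t) • diagonal B.diag + t • B
  have hBt : IsZMatrix Bt := fun i j hij => by
    simpa [Bt, diagonal_apply_ne _ hij] using mul_nonpos_of_nonneg_of_nonpos ht.1 (hB i j hij)
  have hBtd : ∀ i, 0 < (Bt *ᵥ d) i := fun i => by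
    have : (Bt *ᵥ d) i = (1 - t) * (B i i * d i) + t * (B *ᵥ d) i := by
      simp [Bt, add_mulVec, smul_mulVec, mulVec_diagonal]
    rw [this]
    rcases eq_or_lt_of_le ht.1 with rfl | h
    · simpa using hdiag i
    · nlinarith [hdiag i, hBd i, ht.2]
  have hsplit :
      (1 - t) • diagonal B.diag + t • (B + vecMulVec c 1) = Bt + vecMulVec (t • c) 1 := by
    rw [smul_add, ← add_assoc, smul_vecMulVec]
  rw [hsplit]
  exact hBt.det_add_vecMulVec_ne_zero hd hBtd fun i => mul_nonneg ht.1 (hc i)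

end IsZMatrix

theorem sum_erase_eq_sum_Iio_add_sum_Ioi {α M : Type*} [Fintype α] [LinearOrder α]
    [LocallyFiniteOrderBot α] [LocallyFiniteOrderTop α] [AddCommMonoid M] (f : α → M) (i : α) :
    ∑ j ∈ univ.erase i, f j = ∑ j ∈ Iio i, f j + ∑ j ∈ Ioi i, f j := by
  rw [← sum_union (disjoint_left.2 fun j hj hj' => (mem_Iio.1 hj).asymm (mem_Ioi.1 hj'))]
  congr 1
  ext j
  simp only [mem_union, mem_Iio, mem_Ioi, mem_erase, mem_univ, and_true]
  exact ne_iff_lt_or_gt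

section Nekrasov

variable {n : ℕ} {𝕜 : Type*} [RCLike 𝕜]

theorem nekH_eq (A : Matrix (Fin n) (Fin n) 𝕜) (i : Fin n) :
    nekH A i = ∑ j ∈ Iio i, ‖A i j‖ / ‖A j j‖ * nekH A j + ∑ j ∈ Ioi i, ‖A i j‖ := by
  rw [nekH, ← filter_gt_eq_Iio, ← filter_lt_eq_Ioi, sum_filter, sum_filter]
  simp only [dite_eq_ite]

theorem nekZ_eq (A : Matrix (Fin n) (Fin n) 𝕜) (i : Fin n) :
    nekZ A i = ∑ j ∈ Iio i, ‖A i j‖ / ‖A j j‖ * nekZ A j + 1 := by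
  rw [nekZ, ← filter_gt_eq_Iio, sum_filter]
  simp only [dite_eq_ite]

theorem nekH_nonneg (A : Matrix (Fin n) (Fin n) 𝕜) (i : Fin n) : 0 ≤ nekH A i := by
  induction i using WellFoundedLT.induction with
  | ind i ih =>
    rw [nekH_eq]
    exact add_nonneg (sum_nonneg fun j hj => by have := ih j (mem_Iio.1 hj); positivity)
      (sum_nonneg fun j _ => norm_nonneg _)

theorem nekZ_pos (A : Matrix (Fin n) (Fin n) 𝕜) (i : Fin n) : 0 < nekZ A i := by
  induction i using WellFoundedLT.induction with
  | ind i ih =>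
    rw [nekZ_eq]
    exact add_pos_of_nonneg_of_pos
      (sum_nonneg fun j hj => by have := (ih j (mem_Iio.1 hj)).le; positivity) one_pos

theorem IsNekrasov.norm_diag_pos {A : Matrix (Fin n) (Fin n) 𝕜} (hA : IsNekrasov A) (i : Fin n) :
    0 < ‖A i i‖ :=
  (nekH_nonneg A i).trans_lt (hA i)

theorem IsNekrasov.exists_scaling {A : Matrix (Fin n) (Fin n) 𝕜} (hA : IsNekrasov A) :
    ∃ d : Fin n → ℝ, (∀ j, 0 < d j) ∧
      ∀ i, ∑ j ∈ univ.erase i, ‖A i j‖ * d j < ‖A i i‖ * d i := by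
  obtain ⟨ε, hε, hεle⟩ : ∃ ε > 0, ∀ j, ε * nekZ A j ≤ ‖A j j‖ - nekH A j := by
    have : ∀ᶠ ε in 𝓝[>] (0 : ℝ), ∀ j, ε * nekZ A j < ‖A j j‖ - nekH A j := by
      refine eventually_all.2 fun j => nhdsWithin_le_nhds ?_
      have hlim : Tendsto (fun ε : ℝ => ε * nekZ A j) (𝓝 0) (𝓝 0) := by
        simpa using (continuous_mul_const (nekZ A j)).tendsto 0
      exact hlim.eventually (gt_mem_nhds (sub_pos.2 (hA j)))
    obtain ⟨ε, hεlt, hε⟩ := (this.and self_mem_nhdsWithin).exists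
    exact ⟨ε, hε, fun j => (hεlt j).le⟩
  -- `d j = (h_j + ε z_j) / |a_jj|`: the recursions for `h` and `z` telescope the row sums
  set d : Fin n → ℝ := fun j => (nekH A j + ε * nekZ A j) / ‖A j j‖
  have hdiag : ∀ j, ‖A j j‖ * d j = nekH A j + ε * nekZ A j := fun j =>
    mul_div_cancel₀ _ (hA.norm_diag_pos j).ne'
  have hd_le_one : ∀ j, d j ≤ 1 := fun j =>
    (div_le_one (hA.norm_diag_pos j)).2 (by linarith [hεle j])
  refine ⟨d, fun j => div_pos (add_pos_of_nonneg_of_pos (nekH_nonneg A j)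
    (mul_pos hε (nekZ_pos A j))) (hA.norm_diag_pos j), fun i => ?_⟩
  have hlower : ∀ j, ‖A i j‖ * d j
      = ‖A i j‖ / ‖A j j‖ * nekH A j + ε * (‖A i j‖ / ‖A j j‖ * nekZ A j) := fun j => by
    simp only [d]
    ring
  calc ∑ j ∈ univ.erase i, ‖A i j‖ * d j
      = ∑ j ∈ Iio i, ‖A i j‖ * d j + ∑ j ∈ Ioi i, ‖A i j‖ * d j :=
        sum_erase_eq_sum_Iio_add_sum_Ioi _ i
    _ ≤ ∑ j ∈ Iio i, ‖A i j‖ * d j + ∑ j ∈ Ioi i, ‖A i j‖ := by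
        gcongr with j
        exact mul_le_of_le_one_right (norm_nonneg _) (hd_le_one j)
    _ = nekH A i + ε * (nekZ A i - 1) := by
        rw [sum_congr rfl fun j _ => hlower j, sum_add_distrib, ← mul_sum, nekH_eq, nekZ_eq]
        ring
    _ < ‖A i i‖ * d i := by rw [hdiag]; linarith

end Nekrasov

theorem IsNekrasov.exists_pos_mulVec_pos {n : ℕ} {B : Matrix (Fin n) (Fin n) ℝ}
    (hN : IsNekrasov B) (hZ : IsZMatrix B) (hdiag : ∀ i, 0 < B i i) :
    ∃ d : Fin n → ℝ, (∀ j, 0 < d j) ∧ ∀ i, 0 < (B *ᵥ d) i := by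
  obtain ⟨d, hd, hdom⟩ := hN.exists_scaling
  refine ⟨d, hd, fun i => ?_⟩
  have hoff : ∑ j ∈ univ.erase i, B i j * d j = -∑ j ∈ univ.erase i, ‖B i j‖ * d j := by
    rw [← sum_neg_distrib]
    refine sum_congr rfl fun j hj => ?_
    rw [Real.norm_of_nonpos (hZ i j (ne_of_mem_erase hj).symm), neg_mul, neg_neg]
  have := hdom i
  rw [Real.norm_of_nonneg (hdiag i).le] at this
  rw [mulVec, dotProduct, ← add_sum_erase _ _ (mem_univ i), hoff]
  linarith

theorem rPlus_nonneg {n : ℕ} (M : Matrix (Fin n) (Fin n) ℝ) (i : Fin n) : 0 ≤ rPlus M i :=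
  (le_fold_max _).2 (Or.inl le_rfl)

theorem le_rPlus {n : ℕ} (M : Matrix (Fin n) (Fin n) ℝ) {i j : Fin n} (hij : i ≠ j) :
    M i j ≤ rPlus M i :=
  (le_fold_max _).2 (Or.inr ⟨j, mem_erase.2 ⟨hij.symm, mem_univ j⟩, le_rfl⟩)

theorem isZMatrix_BPlus {n : ℕ} (M : Matrix (Fin n) (Fin n) ℝ) : IsZMatrix (BPlus M) :=
  fun _ _ hij => sub_nonpos.2 (le_rPlus M hij)

theorem BPlus_add_vecMulVec_rPlus {n : ℕ} (M : Matrix (Fin n) (Fin n) ℝ) :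
    BPlus M + vecMulVec (rPlus M) 1 = M := by
  ext i j
  simp [BPlus, vecMulVec]

theorem stmt13 {n : ℕ} (M : Matrix (Fin n) (Fin n) ℝ) (hBN : IsBNekrasov M) :
    IsPMatrix M := by
  obtain ⟨d, hd, hBd⟩ := hBN.1.exists_pos_mulVec_pos (isZMatrix_BPlus M) hBN.2
  intro S
  set e : S → Fin n := Subtype.val
  have he : Injective e := Subtype.val_injective
  have hsplit : M.submatrix e e = (BPlus M).submatrix e e + vecMulVec (rPlus M ∘ e) 1 := by
    conv_lhs => rw [← BPlus_add_vecMulVec_rPlus M]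
    rfl
  rw [hsplit]
  exact ((isZMatrix_BPlus M).submatrix he).det_add_vecMulVec_pos (fun k => hd (e k))
    (fun k => (hBd (e k)).trans_le <|
      (isZMatrix_BPlus M).mulVec_apply_le_mulVec_submatrix he (fun j => (hd j).le) k)
    (fun k => rPlus_nonneg M (e k))
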